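/- Let k be a field of characteristic p (p prime) and M an m×m matrix over k satisfying M^p = M. Then every coefficient of the characteristic polynomial det(t·I − M) lies in the prime field F_p, i.e., each coefficient a satisfies a^p = a. -/

import Mathlib

/-!
In characteristic `p` the matrix `X - M` commutes with `M`, so `(X - M) ^ p = X ^ p - M ^ p`;
taking determinants gives `χ_M ^ p = χ_{M ^ p}(X ^ p)`. When `M ^ p = M` this says
`χ_M ^ p = χ_M(X ^ p)`, and comparing the coefficients of `X ^ (i * p)` on both sides
(the left one is `a_i ^ p` by the Frobenius) gives `a_i ^ p = a_i`.
-/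

open Polynomial

theorem Matrix.charmatrix_pow_char {R n : Type*} [CommRing R] [Fintype n] [DecidableEq n]
    [Nonempty n] (p : ℕ) [Fact p.Prime] [CharP R p] (M : Matrix n n R) :
    charmatrix M ^ p = (expand R p : R[X] →+* R[X]).mapMatrix (charmatrix (M ^ p)) := by
  apply matPolyEquiv.injective
  rw [matPolyEquiv_eq_X_pow_sub_C, map_pow, matPolyEquiv_charmatrix,
    sub_pow_char_of_commute p (C M).commute_X, ← C_pow]

theorem Matrix.expand_charpoly_pow_char {R n : Type*} [CommRing R] [Fintype n] [DecidableEq n]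
    (p : ℕ) [Fact p.Prime] [CharP R p] (M : Matrix n n R) :
    expand R p (M ^ p).charpoly = M.charpoly ^ p := by
  cases isEmpty_or_nonempty n
  · simp [charpoly_isEmpty]
  rw [charpoly, charpoly, ← det_pow, charmatrix_pow_char, ← RingHom.map_det]
  rfl

theorem Polynomial.coeff_pow_expChar_of_pow_eq_expand {R : Type*} [CommSemiring R] (p : ℕ)
    [ExpChar R p] {f : R[X]} (hf : f ^ p = expand R p f) (i : ℕ) :
    f.coeff i ^ p = f.coeff i := by
  have hp := expChar_pos R p
  calc f.coeff i ^ p = frobenius R p ((expand R p f).coeff (i * p)) := by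
        rw [coeff_expand_mul hp, frobenius_def]
    _ = (f ^ p).coeff (i * p) := by rw [← map_frobenius_expand, coeff_map]
    _ = f.coeff i := by rw [hf, coeff_expand_mul hp]

theorem charpoly_coeff_in_Fp (p : ℕ) (hp : p.Prime) (k : Type*) [Field k] [CharP k p]
    (m : ℕ) (M : Matrix (Fin m) (Fin m) k) (hM : M ^ p = M) :
    ∀ i : ℕ, (Matrix.charpoly M).coeff i ^ p = (Matrix.charpoly M).coeff i := by
  have : Fact p.Prime := ⟨hp⟩
  refine coeff_pow_expChar_of_pow_eq_expand p ?_
  rw [← M.expand_charpoly_pow_char p, hM]
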